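/- Consider the disturbed switched system X_{t+1} = f_{σ_t}(X_t, w_t), with σ an irreducible Markov chain on P = {1,…,N}, each f_i : ℝ^d × ℝ^m → ℝ^d locally Lipschitz in both arguments with f_i(0,0) = 0, and (w_t) a bounded measurable disturbance sequence (not random). Suppose there are continuous V_i : ℝ^d → [0,∞), α₁, α₂, ρ ∈ K_∞, μ > 1 and a nonnegative matrix [λ_{ij}] with (a) α₁(‖x‖) ≤ V_i(x) ≤ α₂(‖x‖), (b) V_i ≤ μ V_j everywhere, (c) V_i(f_j(x,w)) ≤ λ_{ij} V_i(x) whenever ‖x‖ > ρ(‖w‖), and μ max_i Σ_j p_{ij} λ_{ji} < 1. Then the system is input-to-state stable in L¹: there exist χ, χ' ∈ K_∞ and ψ ∈ KL such that E_{x₀}[χ(‖X_t‖)] ≤ ψ(‖x₀‖, t) + sup_s χ'(‖w_s‖) for all t, with χ = α₁ and ψ(r,t) = α₂(r) e^{−αt} for some α > 0. -/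

import Mathlib

open MeasureTheory ProbabilityTheory Classical

/-- Trajectory of the disturbed switched system `X_{t+1} = f_{σ_t}(X_t, w_t)`. -/
def trajw {N : ℕ} {Ω E W : Type*} (f : Fin N → E → W → E) (σ : ℕ → Ω → Fin N)
    (w : ℕ → W) (x₀ : E) : ℕ → Ω → E
  | 0 => fun _ => x₀
  | t + 1 => fun ω => f (σ t ω) (trajw f σ w x₀ t ω) (w t)

/-- Proposition (input-to-state stability in L¹): consider
`X_{t+1} = f_{σ_t}(X_t, w_t)` with `σ` an irreducible Markov chain on `{1,…,N}`, each
`f_i` locally Lipschitz in both arguments with `f_i(0,0) = 0`, and `(w_t)` a bounded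
(deterministic) disturbance.  If there are continuous `V_i ≥ 0`, `α₁, α₂, ρ ∈ K_∞`,
`μ > 1` and a nonnegative matrix `[λ_{ij}]` with (a) `α₁(‖x‖) ≤ V_i(x) ≤ α₂(‖x‖)`,
(b) `V_i ≤ μ V_j` everywhere, (c) `V_i(f_j(x,w)) ≤ λ_{ij} V_i(x)` whenever
`‖x‖ > ρ(‖w‖)`, and `μ max_i Σ_j p_{ij} λ_{ji} < 1`, then the system is
input-to-state stable in `L¹` with `χ = α₁`, `ψ(r,t) = α₂(r) e^{−αt}` for some `α > 0`,
and some gain `χ' ∈ K_∞`: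
`E_{x₀}[α₁(‖X_t‖)] ≤ α₂(‖x₀‖) e^{−αt} + sup_s χ'(‖w_s‖)` for all `t` and `x₀`. -/
theorem stmt_15 {d m N : ℕ} (hN : 0 < N)
    (f : Fin N → EuclideanSpace ℝ (Fin d) → EuclideanSpace ℝ (Fin m) →
      EuclideanSpace ℝ (Fin d))
    (hfl : ∀ i, LocallyLipschitz
      (fun q : EuclideanSpace ℝ (Fin d) × EuclideanSpace ℝ (Fin m) => f i q.1 q.2))
    (hf0 : ∀ i, f i 0 0 = 0)
    (w : ℕ → EuclideanSpace ℝ (Fin m)) (hw : ∃ B : ℝ, ∀ s, ‖w s‖ ≤ B)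
    (p : Fin N → Fin N → ℝ) (hp : ∀ i j, 0 ≤ p i j) (hrow : ∀ i, ∑ j, p i j = 1)
    (hirr : ∀ i j, ∃ n : ℕ, 0 < n ∧ 0 < ((Matrix.of p) ^ n) i j)
    {Ω : Type*} [mΩ : MeasurableSpace Ω] (P : Measure Ω) [IsProbabilityMeasure P]
    (ℱ : Filtration ℕ mΩ)
    (σ : ℕ → Ω → Fin N) (hσad : ∀ t, Measurable[ℱ t] (σ t))
    (hMarkov : ∀ (t : ℕ) (g : Fin N → ℝ),
      P[(fun ω => g (σ (t + 1) ω))|ℱ t] =ᵐ[P] fun ω => ∑ j, p (σ t ω) j * g j)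
    (V : Fin N → EuclideanSpace ℝ (Fin d) → ℝ)
    (hVcont : ∀ i, Continuous (V i)) (hV0 : ∀ i x, 0 ≤ V i x)
    (α₁ α₂ ρ : ℝ → ℝ)
    (hα₁ : Continuous α₁ ∧ StrictMonoOn α₁ (Set.Ici 0) ∧ α₁ 0 = 0 ∧
      Filter.Tendsto α₁ Filter.atTop Filter.atTop)
    (hα₂ : Continuous α₂ ∧ StrictMonoOn α₂ (Set.Ici 0) ∧ α₂ 0 = 0 ∧
      Filter.Tendsto α₂ Filter.atTop Filter.atTop)
    (hρ : Continuous ρ ∧ StrictMonoOn ρ (Set.Ici 0) ∧ ρ 0 = 0 ∧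
      Filter.Tendsto ρ Filter.atTop Filter.atTop)
    (μ : ℝ) (hμ : 1 < μ)
    (Λ : Fin N → Fin N → ℝ) (hΛ : ∀ i j, 0 ≤ Λ i j)
    (ha : ∀ i x, α₁ ‖x‖ ≤ V i x ∧ V i x ≤ α₂ ‖x‖)
    (hb : ∀ i j x, V i x ≤ μ * V j x)
    (hc : ∀ i j x (u : EuclideanSpace ℝ (Fin m)), ρ ‖u‖ < ‖x‖ →
      V i (f j x u) ≤ Λ i j * V i x)
    (hcond : μ * sSup {a | ∃ i, a = ∑ j, p i j * Λ j i} < 1) :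
    ∃ α : ℝ, 0 < α ∧
      ∃ χ' : ℝ → ℝ, (Continuous χ' ∧ StrictMonoOn χ' (Set.Ici 0) ∧ χ' 0 = 0 ∧
        Filter.Tendsto χ' Filter.atTop Filter.atTop) ∧
        ∀ (x₀ : EuclideanSpace ℝ (Fin d)) (t : ℕ),
          ∫⁻ ω, ENNReal.ofReal (α₁ ‖trajw f σ w x₀ t ω‖) ∂P
            ≤ ENNReal.ofReal (α₂ ‖x₀‖ * Real.exp (-α * t) + ⨆ s : ℕ, χ' ‖w s‖) := by
  classical
  obtain ⟨B, hB⟩ := hw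
  haveI hNE : Nonempty (Fin N) := ⟨⟨0, hN⟩⟩
  -- supremum of the disturbance norms
  have hbddw : BddAbove (Set.range fun s => ‖w s‖) := ⟨B, by rintro _ ⟨s, rfl⟩; exact hB s⟩
  set Bw : ℝ := ⨆ s, ‖w s‖ with hBwdef
  have hws : ∀ s, ‖w s‖ ≤ Bw := fun s => le_ciSup hbddw s
  have hBw0 : 0 ≤ Bw := le_trans (norm_nonneg (w 0)) (hws 0)
  -- the contraction factor
  set L : ℝ := sSup {a | ∃ i, a = ∑ j, p i j * Λ j i} with hLdef
  have hsetL : {a | ∃ i, a = ∑ j, p i j * Λ j i}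
      = Set.range (fun i => ∑ j, p i j * Λ j i) := by
    ext a; constructor
    · rintro ⟨i, rfl⟩; exact ⟨i, rfl⟩
    · rintro ⟨i, rfl⟩; exact ⟨i, rfl⟩
  have hLge : ∀ i, (∑ j, p i j * Λ j i) ≤ L := by
    intro i
    rw [hLdef, hsetL]
    exact le_csSup ((Set.finite_range _).bddAbove) ⟨i, rfl⟩
  have hL0 : 0 ≤ L :=
    le_trans (Finset.sum_nonneg fun j _ => mul_nonneg (hp _ j) (hΛ j _)) (hLge ⟨0, hN⟩)
  have hμ0 : (0:ℝ) ≤ μ := le_of_lt (lt_trans one_pos hμ)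
  set r : ℝ := μ * L with hrdef
  have hr0 : 0 ≤ r := mul_nonneg hμ0 hL0
  have hr1 : r < 1 := hcond
  set r' : ℝ := max r (1/2) with hr'def
  have hrr' : r ≤ r' := le_max_left _ _
  have hr'pos : 0 < r' := lt_of_lt_of_le (by norm_num) (le_max_right _ _)
  have hr'1 : r' < 1 := max_lt hr1 (by norm_num)
  set α : ℝ := - Real.log r' with hαdef
  have hαpos : 0 < α := by
    have := Real.log_neg hr'pos hr'1
    simp only [hαdef]; linarith
  have hexp : ∀ t : ℕ, Real.exp (-α * t) = r' ^ t := by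
    intro t
    have : -α * (t:ℝ) = (t:ℝ) * Real.log r' := by rw [hαdef]; ring
    rw [this, Real.exp_nat_mul, Real.exp_log hr'pos]
  -- monotonicity of ρ
  have hρmono : MonotoneOn ρ (Set.Ici 0) := hρ.2.1.monotoneOn
  have hρBw0 : 0 ≤ ρ Bw := by
    have := hρmono (Set.mem_Ici.2 le_rfl) (Set.mem_Ici.2 hBw0) hBw0
    rw [hρ.2.2.1] at this; exact this
  have hfc : ∀ i, Continuous fun q : EuclideanSpace ℝ (Fin d) × EuclideanSpace ℝ (Fin m) => f i q.1 q.2 := fun i => (hfl i).continuous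
  -- a uniform bound for V on the image of the "disturbance-dominated" compact set
  have hMex : ∀ ki : Fin N × Fin N, ∃ Mk : ℝ,
      (∃ x u, ‖x‖ ≤ ρ Bw ∧ ‖u‖ ≤ Bw ∧ Mk = V ki.1 (f ki.2 x u)) ∧
      ∀ (x : EuclideanSpace ℝ (Fin d)) (u : EuclideanSpace ℝ (Fin m)), ‖x‖ ≤ ρ Bw → ‖u‖ ≤ Bw → V ki.1 (f ki.2 x u) ≤ Mk := by
    rintro ⟨k, i⟩
    have hK : IsCompact ((Metric.closedBall (0:EuclideanSpace ℝ (Fin d)) (ρ Bw)) ×ˢ (Metric.closedBall (0:EuclideanSpace ℝ (Fin m)) Bw)) :=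
      (isCompact_closedBall _ _).prod (isCompact_closedBall _ _)
    have hKne : ((Metric.closedBall (0:EuclideanSpace ℝ (Fin d)) (ρ Bw)) ×ˢ (Metric.closedBall (0:EuclideanSpace ℝ (Fin m)) Bw)).Nonempty :=
      ⟨(0, 0), by simp [Metric.mem_closedBall, hρBw0, hBw0]⟩
    obtain ⟨q₀, hq₀, hmax⟩ := hK.exists_isMaxOn hKne
      (((hVcont k).comp (hfc i)).continuousOn)
    refine ⟨V k (f i q₀.1 q₀.2), ⟨q₀.1, q₀.2, ?_, ?_, rfl⟩, ?_⟩
    · have := hq₀.1; simpa [Metric.mem_closedBall, dist_zero_right] using this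
    · have := hq₀.2; simpa [Metric.mem_closedBall, dist_zero_right] using this
    · intro x u hx hu
      have hmem : ((x, u) : EuclideanSpace ℝ (Fin d) × EuclideanSpace ℝ (Fin m))
          ∈ (Metric.closedBall (0:EuclideanSpace ℝ (Fin d)) (ρ Bw))
            ×ˢ (Metric.closedBall (0:EuclideanSpace ℝ (Fin m)) Bw) := by
        simp [Metric.mem_closedBall, dist_zero_right, hx, hu]
      exact hmax hmem
  choose Mk hMkval hMk using hMex
  have huniNE : (Finset.univ : Finset (Fin N × Fin N)).Nonempty := Finset.univ_nonempty
  set M : ℝ := max 0 ((Finset.univ : Finset (Fin N × Fin N)).sup' huniNE Mk) with hMdef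
  have hM0 : 0 ≤ M := le_max_left _ _
  have hMbound : ∀ k i (x : EuclideanSpace ℝ (Fin d)) (u : EuclideanSpace ℝ (Fin m)), ‖x‖ ≤ ρ Bw → ‖u‖ ≤ Bw → V k (f i x u) ≤ M := by
    intro k i x u hx hu
    exact (hMk (k, i) x u hx hu).trans
      ((Finset.le_sup' Mk (Finset.mem_univ (k, i))).trans (le_max_right _ _))
  set C : ℝ := M / (1 - r') with hCdef
  have hr'lt : (0:ℝ) < 1 - r' := by linarith
  have hC0 : 0 ≤ C := div_nonneg hM0 (le_of_lt hr'lt)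
  have hMC : M = (1 - r') * C := by
    rw [hCdef]; field_simp
  -- the core L¹ estimate with additive constant C
  have main : ∀ (x₀ : EuclideanSpace ℝ (Fin d)) (t : ℕ),
      ∫⁻ ω, ENNReal.ofReal (α₁ ‖trajw f σ w x₀ t ω‖) ∂P
        ≤ ENNReal.ofReal (α₂ ‖x₀‖ * Real.exp (-α * t) + C) := by
    intro x₀
    set X : ℕ → Ω → EuclideanSpace ℝ (Fin d) := trajw f σ w x₀ with hXdef
    have hXsucc : ∀ t ω, X (t + 1) ω = f (σ t ω) (X t ω) (w t) := fun t ω => rfl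
    -- measurability of the trajectory
    have hXmeas : ∀ t, Measurable[ℱ t] (X t) := by
      intro t; induction t with
      | zero => exact measurable_const
      | succ t ih =>
        have hF : Measurable fun q : EuclideanSpace ℝ (Fin d) × Fin N => f q.2 q.1 (w t) :=
          measurable_from_prod_countable_left fun j =>
            ((hfc j).comp (continuous_id.prodMk continuous_const)).measurable
        have : Measurable[ℱ t] fun ω => f (σ t ω) (X t ω) (w t) :=
          hF.comp (Measurable.prodMk ih (hσad t))
        exact (this.mono (ℱ.mono (Nat.le_succ t)) le_rfl)
    have hX1meas : ∀ t, Measurable[ℱ t] (X (t + 1)) := by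
      intro t
      have hF : Measurable fun q : EuclideanSpace ℝ (Fin d) × Fin N => f q.2 q.1 (w t) :=
        measurable_from_prod_countable_left fun j =>
          ((hfc j).comp (continuous_id.prodMk continuous_const)).measurable
      exact hF.comp (Measurable.prodMk (hXmeas t) (hσad t))
    have hXm : ∀ t, Measurable (X t) := fun t => (hXmeas t).mono (ℱ.le t) le_rfl
    -- finite range of the trajectory
    have hfin : ∀ t, (Set.range (X t)).Finite := by
      intro t; induction t with
      | zero => exact (Set.finite_singleton x₀).subset (by rintro _ ⟨ω, rfl⟩; exact rfl)
      | succ t ih =>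
        have hsub : Set.range (X (t + 1)) ⊆
            (fun q : Fin N × EuclideanSpace ℝ (Fin d) => f q.1 q.2 (w t)) '' (Set.univ ×ˢ Set.range (X t)) := by
          rintro _ ⟨ω, rfl⟩
          exact ⟨(σ t ω, X t ω), ⟨trivial, ⟨ω, rfl⟩⟩, rfl⟩
        exact ((Set.finite_univ.prod ih).image _).subset hsub
    -- boundedness of continuous functionals along the trajectory
    have hbdd : ∀ (g : EuclideanSpace ℝ (Fin d) → ℝ) (t : ℕ), ∃ Cg : ℝ, ∀ ω, |g (X t ω)| ≤ Cg := by
      intro g t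
      obtain ⟨Cg, hCg⟩ := (((hfin t).image (fun y => |g y|)).bddAbove)
      exact ⟨Cg, fun ω => hCg ⟨X t ω, ⟨ω, rfl⟩, rfl⟩⟩
    -- integrability of functions of the form ω ↦ H (σ s ω) (X t ω)
    have hIntH : ∀ (H : Fin N → EuclideanSpace ℝ (Fin d) → ℝ), (∀ k, Continuous (H k)) → ∀ (s t : ℕ),
        Integrable (fun ω => H (σ s ω) (X t ω)) P := by
      intro H hH s t
      have hmeas : Measurable fun ω => H (σ s ω) (X t ω) := by
        have hG : Measurable fun q : EuclideanSpace ℝ (Fin d) × Fin N => H q.2 q.1 :=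
          measurable_from_prod_countable_left fun k =>
            (hH k).measurable
        exact hG.comp (Measurable.prodMk (hXm t) ((hσad s).mono (ℱ.le s) le_rfl))
      choose Cv hCv using fun k => hbdd (H k) t
      have hbound : ∀ ω, ‖H (σ s ω) (X t ω)‖ ≤ Finset.univ.sup' Finset.univ_nonempty Cv := by
        intro ω
        rw [Real.norm_eq_abs]
        exact (hCv (σ s ω) ω).trans (Finset.le_sup' Cv (Finset.mem_univ _))
      exact Integrable.mono' (integrable_const _) hmeas.aestronglyMeasurable
        (Filter.Eventually.of_forall hbound)
    -- the expectation sequence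
    set e : ℕ → ℝ := fun t => ∫ ω, V (σ t ω) (X t ω) ∂P with hedef
    have hen : ∀ t, 0 ≤ e t := fun t => integral_nonneg fun ω => hV0 _ _
    have he0 : e 0 ≤ α₂ ‖x₀‖ := by
      have h1 : ∀ ω, V (σ 0 ω) (X 0 ω) ≤ α₂ ‖x₀‖ := fun ω => (ha (σ 0 ω) x₀).2
      calc e 0 ≤ ∫ _ω, α₂ ‖x₀‖ ∂P :=
            integral_mono (hIntH V hVcont 0 0) (integrable_const _) h1
        _ = α₂ ‖x₀‖ := by simp
    -- the key one-step estimate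
    have hestep : ∀ t, e (t + 1) ≤ r * e t + M := by
      intro t
      -- Markov property step: E[V_{σ_{t+1}}(X_{t+1})] = E[Σ_k p_{σ_t,k} V_k(X_{t+1})]
      have hkey : e (t + 1) = ∫ ω, (∑ k, p (σ t ω) k * V k (X (t + 1) ω)) ∂P := by
        have h1 : (fun ω => V (σ (t + 1) ω) (X (t + 1) ω))
            = fun ω => ∑ k, V k (X (t + 1) ω) * (if σ (t + 1) ω = k then (1:ℝ) else 0) := by
          funext ω
          simp [mul_ite, mul_one, mul_zero, Finset.sum_ite_eq]
        have hterm : ∀ k : Fin N,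
            ∫ ω, V k (X (t + 1) ω) * (if σ (t + 1) ω = k then (1:ℝ) else 0) ∂P
              = ∫ ω, V k (X (t + 1) ω) * p (σ t ω) k ∂P := by
          intro k
          have hF : StronglyMeasurable[ℱ t] (fun ω => V k (X (t + 1) ω)) :=
            ((hVcont k).measurable.comp (hX1meas t)).stronglyMeasurable
          have hG : Integrable (fun ω => (if σ (t + 1) ω = k then (1:ℝ) else 0)) P := by
            have := hIntH (fun j (_ : EuclideanSpace ℝ (Fin d)) => if j = k then (1:ℝ) else 0)
              (fun j => continuous_const) (t + 1) (t + 1)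
            simpa using this
          have hFG : Integrable
              (fun ω => V k (X (t + 1) ω) * (if σ (t + 1) ω = k then (1:ℝ) else 0)) P := by
            have := hIntH (fun j y => V k y * (if j = k then (1:ℝ) else 0))
              (fun j => (hVcont k).mul continuous_const) (t + 1) (t + 1)
            simpa using this
          have hpull :
              P[(fun ω => V k (X (t + 1) ω) * (if σ (t + 1) ω = k then (1:ℝ) else 0))|ℱ t]
                =ᵐ[P] (fun ω => V k (X (t + 1) ω))
                  * P[(fun ω => (if σ (t + 1) ω = k then (1:ℝ) else 0))|ℱ t] :=
            condExp_mul_of_stronglyMeasurable_left hF hFG hG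
          have hcondG :
              P[(fun ω => (if σ (t + 1) ω = k then (1:ℝ) else 0))|ℱ t]
                =ᵐ[P] fun ω => p (σ t ω) k := by
            have := hMarkov t (fun j => if j = k then (1:ℝ) else 0)
            refine this.trans (Filter.Eventually.of_forall fun ω => ?_)
            simp [mul_ite, mul_one, mul_zero, Finset.sum_ite_eq']
          calc ∫ ω, V k (X (t + 1) ω) * (if σ (t + 1) ω = k then (1:ℝ) else 0) ∂P
              = ∫ ω, (P[(fun ω => V k (X (t + 1) ω)
                  * (if σ (t + 1) ω = k then (1:ℝ) else 0))|ℱ t]) ω ∂P :=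
                (integral_condExp (ℱ.le t)).symm
            _ = ∫ ω, V k (X (t + 1) ω) * p (σ t ω) k ∂P := by
                refine integral_congr_ae (hpull.trans ?_)
                filter_upwards [hcondG] with ω hω
                simp only [Pi.mul_apply]
                rw [hω]
        rw [hedef]
        simp only
        rw [h1]
        rw [integral_finset_sum Finset.univ (fun k _ => by
          have := hIntH (fun j y => V k y * (if j = k then (1:ℝ) else 0))
            (fun j => (hVcont k).mul continuous_const) (t + 1) (t + 1)
          simpa using this)]
        rw [Finset.sum_congr rfl (fun k _ => hterm k)]
        rw [← integral_finset_sum Finset.univ (fun k _ => by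
          have := hIntH (fun j y => V k y * p j k)
            (fun j => (hVcont k).mul continuous_const) t (t + 1)
          simpa using this)]
        refine integral_congr_ae (Filter.Eventually.of_forall fun ω => ?_)
        exact Finset.sum_congr rfl fun k _ => mul_comm _ _
      -- pointwise bound
      have hptw : ∀ ω, (∑ k, p (σ t ω) k * V k (X (t + 1) ω))
          ≤ r * V (σ t ω) (X t ω) + M := by
        intro ω
        set i := σ t ω with hi
        set x := X t ω with hx
        have hXt1 : X (t + 1) ω = f i x (w t) := rfl
        by_cases hcase : ρ ‖w t‖ < ‖x‖
        · have h1 : ∀ k, V k (f i x (w t)) ≤ Λ k i * (μ * V i x) := fun k =>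
            (hc k i x (w t) hcase).trans
              (mul_le_mul_of_nonneg_left (hb k i x) (hΛ k i))
          calc (∑ k, p i k * V k (X (t + 1) ω))
              ≤ ∑ k, p i k * (Λ k i * (μ * V i x)) := by
                refine Finset.sum_le_sum fun k _ => ?_
                rw [hXt1]
                exact mul_le_mul_of_nonneg_left (h1 k) (hp i k)
            _ = (∑ k, p i k * Λ k i) * (μ * V i x) := by
                rw [Finset.sum_mul]
                exact Finset.sum_congr rfl fun k _ => by ring
            _ ≤ L * (μ * V i x) :=
                mul_le_mul_of_nonneg_right (hLge i) (mul_nonneg hμ0 (hV0 i x))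
            _ = r * V i x := by rw [hrdef]; ring
            _ ≤ r * V i x + M := le_add_of_nonneg_right hM0
        · push_neg at hcase
          have hx' : ‖x‖ ≤ ρ Bw := hcase.trans
            (hρmono (Set.mem_Ici.2 (norm_nonneg _)) (Set.mem_Ici.2 hBw0) (hws t))
          calc (∑ k, p i k * V k (X (t + 1) ω))
              ≤ ∑ k, p i k * M := by
                refine Finset.sum_le_sum fun k _ => ?_
                rw [hXt1]
                exact mul_le_mul_of_nonneg_left (hMbound k i x (w t) hx' (hws t)) (hp i k)
            _ = M := by rw [← Finset.sum_mul, hrow i, one_mul]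
            _ ≤ r * V i x + M := le_add_of_nonneg_left (mul_nonneg hr0 (hV0 i x))
      calc e (t + 1) = ∫ ω, (∑ k, p (σ t ω) k * V k (X (t + 1) ω)) ∂P := hkey
        _ ≤ ∫ ω, (r * V (σ t ω) (X t ω) + M) ∂P := by
            refine integral_mono ?_ ?_ hptw
            · have := hIntH (fun j y => ∑ k, p j k * V k y)
                (fun j => continuous_finset_sum _ fun k _ => continuous_const.mul (hVcont k))
                t (t + 1)
              simpa using this
            · exact ((hIntH V hVcont t t).const_mul r).add (integrable_const M)
        _ = r * e t + M := by
            rw [integral_add ((hIntH V hVcont t t).const_mul r) (integrable_const M),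
              integral_const_mul]
            simp [hedef]
      -- done
    -- closed-form bound by induction
    have hebound : ∀ t, e t ≤ α₂ ‖x₀‖ * r' ^ t + C := by
      intro t; induction t with
      | zero => simpa using he0.trans (le_add_of_nonneg_right hC0)
      | succ t ih =>
        calc e (t + 1) ≤ r * e t + M := hestep t
          _ ≤ r' * e t + M := add_le_add_left (mul_le_mul_of_nonneg_right hrr' (hen t)) M
          _ ≤ r' * (α₂ ‖x₀‖ * r' ^ t + C) + M :=
              add_le_add_left (mul_le_mul_of_nonneg_left ih (le_of_lt hr'pos)) M
          _ = α₂ ‖x₀‖ * r' ^ (t + 1) + (r' * C + M) := by ring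
          _ ≤ α₂ ‖x₀‖ * r' ^ (t + 1) + C := by
              have : r' * C + M ≤ C := by rw [hMC]; ring_nf; exact le_rfl
              linarith
    intro t
    have hptw2 : ∀ ω, α₁ ‖X t ω‖ ≤ V (σ t ω) (X t ω) := fun ω => (ha _ _).1
    calc ∫⁻ ω, ENNReal.ofReal (α₁ ‖X t ω‖) ∂P
        ≤ ∫⁻ ω, ENNReal.ofReal (V (σ t ω) (X t ω)) ∂P :=
          lintegral_mono fun ω => ENNReal.ofReal_le_ofReal (hptw2 ω)
      _ = ENNReal.ofReal (e t) :=
          (ofReal_integral_eq_lintegral_ofReal (hIntH V hVcont t t)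
            (Filter.Eventually.of_forall fun ω => hV0 _ _)).symm
      _ ≤ ENNReal.ofReal (α₂ ‖x₀‖ * Real.exp (-α * t) + C) := by
          refine ENNReal.ofReal_le_ofReal ?_
          rw [hexp t]
          exact hebound t
  -- choose the gain χ'
  refine ⟨α, hαpos, ?_⟩
  rcases eq_or_lt_of_le hBw0 with hB0 | hBpos
  · -- no disturbance: all w s = 0 and the additive constant vanishes
    have hwz : ∀ s, ‖w s‖ = 0 := fun s =>
      le_antisymm (by rw [hB0]; exact hws s) (norm_nonneg _)
    -- M = 0 in this case
    have hMk0 : ∀ ki : Fin N × Fin N, Mk ki = 0 := by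
      intro ki
      obtain ⟨x, u, hx, hu, hval⟩ := hMkval ki
      have hρ0 : ρ Bw = 0 := by rw [← hB0]; exact hρ.2.2.1
      have hx0 : x = 0 := by
        have : ‖x‖ ≤ 0 := by rwa [hρ0] at hx
        exact norm_eq_zero.1 (le_antisymm this (norm_nonneg _))
      have hu0 : u = 0 := by
        have : ‖u‖ ≤ 0 := by rwa [← hB0] at hu
        exact norm_eq_zero.1 (le_antisymm this (norm_nonneg _))
      have hV00 : V ki.1 (0 : EuclideanSpace ℝ (Fin d)) = 0 := by
        have h2 := (ha ki.1 (0 : EuclideanSpace ℝ (Fin d))).2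
        have h3 := hV0 ki.1 (0 : EuclideanSpace ℝ (Fin d))
        rw [norm_zero, hα₂.2.2.1] at h2
        linarith
      rw [hval, hx0, hu0, hf0, hV00]
    have hMzero : M = 0 := by
      rw [hMdef]
      have : (Finset.univ : Finset (Fin N × Fin N)).sup' huniNE Mk = 0 := by
        apply le_antisymm
        · exact Finset.sup'_le _ _ fun ki _ => le_of_eq (hMk0 ki)
        · exact le_trans (le_of_eq (hMk0 huniNE.choose).symm)
            (Finset.le_sup' Mk (Finset.mem_univ _))
      rw [this]; simp
    have hCzero : C = 0 := by rw [hCdef, hMzero]; simp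
    refine ⟨fun x => x, ⟨continuous_id, fun a _ b _ h => h, rfl, Filter.tendsto_id⟩, ?_⟩
    intro x₀ t
    have hsup : (⨆ s : ℕ, ‖w s‖) = 0 := by rw [← hBwdef, ← hB0]
    calc ∫⁻ ω, ENNReal.ofReal (α₁ ‖trajw f σ w x₀ t ω‖) ∂P
        ≤ ENNReal.ofReal (α₂ ‖x₀‖ * Real.exp (-α * t) + C) := main x₀ t
      _ ≤ ENNReal.ofReal (α₂ ‖x₀‖ * Real.exp (-α * t) + ⨆ s : ℕ, ‖w s‖) := by
          rw [hCzero, hsup]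
  · -- nonzero disturbance: use a linear gain with large slope
    obtain ⟨s₀, hs₀⟩ : ∃ s₀, Bw / 2 < ‖w s₀‖ := by
      by_contra hcon
      push_neg at hcon
      have : Bw ≤ Bw / 2 := ciSup_le hcon
      linarith
    set c : ℝ := 2 * C / Bw + 1 with hcdef
    have hcCge : 2 * C / Bw ≤ c := by rw [hcdef]; linarith
    have hcnn : 0 ≤ 2 * C / Bw := div_nonneg (by linarith) (le_of_lt hBpos)
    have hcpos : 0 < c := lt_of_le_of_lt hcnn (by rw [hcdef]; linarith)
    refine ⟨fun x => c * x, ⟨continuous_const.mul continuous_id,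
      fun a _ b _ h => by exact mul_lt_mul_of_pos_left h hcpos,
      mul_zero c, Filter.Tendsto.const_mul_atTop hcpos Filter.tendsto_id⟩, ?_⟩
    intro x₀ t
    have hbdd2 : BddAbove (Set.range fun s => c * ‖w s‖) :=
      ⟨c * Bw, by rintro _ ⟨s, rfl⟩; exact mul_le_mul_of_nonneg_left (hws s) (le_of_lt hcpos)⟩
    have hCle : C ≤ ⨆ s : ℕ, c * ‖w s‖ := by
      have h1 : C = (2 * C / Bw) * (Bw / 2) := by
        field_simp
      have h2 : (2 * C / Bw) * (Bw / 2) ≤ c * ‖w s₀‖ :=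
        mul_le_mul hcCge (le_of_lt hs₀) (by linarith) (le_of_lt hcpos)
      calc C = (2 * C / Bw) * (Bw / 2) := h1
        _ ≤ c * ‖w s₀‖ := h2
        _ ≤ ⨆ s : ℕ, c * ‖w s‖ := le_ciSup hbdd2 s₀
    calc ∫⁻ ω, ENNReal.ofReal (α₁ ‖trajw f σ w x₀ t ω‖) ∂P
        ≤ ENNReal.ofReal (α₂ ‖x₀‖ * Real.exp (-α * t) + C) := main x₀ t
      _ ≤ ENNReal.ofReal (α₂ ‖x₀‖ * Real.exp (-α * t) + ⨆ s : ℕ, c * ‖w s‖) :=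
          ENNReal.ofReal_le_ofReal (add_le_add_right hCle _)
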